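/- There exists a universal constant $C>0$ with the following property. Let $\bar f:[0,1]\to[0,\infty)$ be continuously differentiable and concave with $\bar f(1)=0$, let $f:[0,1]\to\mathbb R$ be continuous with $|f|\le\bar f$ on $[0,1]$, let $n\ge 1$ be an integer, and define $f_n(r) = -r^{-4n}\int_0^r s^{8n-1}\big(\int_s^1 \tau^{1-4n} f(\tau)\,d\tau\big)ds$ for $r\in(0,1)$. Then for all $r\in(0,1)$: $|f_n''(r)| \le C\,M(r)$, where $M(r)=\sup_{\tau\in[0,r]}\bar f(\tau)+\sup_{\tau\in[0,r]}\tau\bar f'(\tau)$. -/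

import Mathlib

/-!
With `k = 4n`, `g(s) = ∫_s^1 τ^(1-k) f(τ) dτ` (`tailIntegral`) and `F(x) = ∫_0^x s^(2k-1) g(s) ds`
(`nestedIntegral`), so that `f_n(x) = -x^(-k) F(x)`, two differentiations give
`f_n''(r) = -k(k+1) r^(-k-2) F(r) + r^(k-2) g(r) + f(r)`.
Since `f̄` is concave it lies below its tangent at `r`, whose slope is at most `M₂ / r`, so
`|f(τ)| ≤ M₁ + (M₂ / r) τ` on `(0, 1]`, where `M₁`, `M₂` are the two suprema in `M(r)`.
Integrating this majorant gives `|g(s)| ≤ (M₁ + M₂) / (k - 3) · s^(2-k)` for `s ≤ r`: the factor `s`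
in the second term is bounded by `r`, which cancels the `1 / r`. Hence
`|F(r)| ≤ (M₁ + M₂) / (k - 3) · r^(k+2) / (k + 2)`, and all three terms of `f_n''(r)` are
`O(M₁ + M₂)` uniformly in `k ≥ 4`; the constant `6` works.
-/

open Real MeasureTheory Set intervalIntegral

noncomputable def tailIntegral (f : ℝ → ℝ) (k : ℤ) (s : ℝ) : ℝ := ∫ τ in s..1, τ ^ (1 - k) * f τ

noncomputable def nestedIntegral (f : ℝ → ℝ) (k : ℤ) (x : ℝ) : ℝ :=
  ∫ s in (0:ℝ)..x, s ^ (2 * k - 1) * tailIntegral f k s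

theorem ConcaveOn.le_add_deriv_mul_sub {S : Set ℝ} {φ : ℝ → ℝ} (hφ : ConcaveOn ℝ S φ) {x y : ℝ}
    (hx : x ∈ S) (hy : y ∈ S) (hxy : x ≤ y) (hd : DifferentiableAt ℝ φ x) :
    φ y ≤ φ x + deriv φ x * (y - x) := by
  rcases hxy.eq_or_lt with rfl | hlt
  · simp
  · have hslope := hφ.slope_le_deriv hx hy hlt hd
    rw [slope_def_field, div_le_iff₀ (sub_pos.2 hlt)] at hslope
    linarith

theorem ConcaveOn.le_add_div_mul {S : Set ℝ} {φ : ℝ → ℝ} (hφ : ConcaveOn ℝ S φ) {r M₁ M₂ : ℝ}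
    (hr : 0 < r) (hrS : r ∈ S) (hd : DifferentiableAt ℝ φ r)
    (hM₁ : ∀ τ ∈ S, τ ≤ r → φ τ ≤ M₁) (hM₂ : r * deriv φ r ≤ M₂) (hM₂₀ : 0 ≤ M₂)
    {τ : ℝ} (hτ : τ ∈ S) (hτ₀ : 0 ≤ τ) : φ τ ≤ M₁ + M₂ / r * τ := by
  have hslope : 0 ≤ M₂ / r := div_nonneg hM₂₀ hr.le
  rcases le_or_gt τ r with hτr | hrτ
  · nlinarith [hM₁ τ hτ hτr]
  · have hd' : deriv φ r ≤ M₂ / r := by rw [le_div_iff₀ hr]; linarith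
    calc φ τ ≤ φ r + deriv φ r * (τ - r) := hφ.le_add_deriv_mul_sub hrS hτ hrτ.le hd
      _ ≤ M₁ + M₂ / r * (τ - r) :=
          add_le_add (hM₁ r hrS le_rfl) (mul_le_mul_of_nonneg_right hd' (by linarith))
      _ ≤ M₁ + M₂ / r * τ := by nlinarith

theorem zero_notMem_uIcc_one {s : ℝ} (hs : 0 < s) : (0:ℝ) ∉ uIcc s 1 :=
  fun h => (lt_min hs one_pos).not_ge h.1

theorem integral_zpow_le_of_lt_neg_one {s : ℝ} (hs : 0 < s) {m : ℤ} (hm : m + 1 < 0) :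
    ∫ τ in s..1, τ ^ m ≤ s ^ (m + 1) / (-(m + 1) : ℝ) := by
  have hm' : (m : ℝ) + 1 < 0 := by exact_mod_cast hm
  rw [integral_zpow (Or.inr ⟨by omega, zero_notMem_uIcc_one hs⟩), one_zpow, ← neg_div_neg_eq,
    neg_sub]
  exact div_le_div_of_nonneg_right (by linarith) (by linarith)

theorem abs_tailIntegral_le {f : ℝ → ℝ} {k : ℤ} (hk : 4 ≤ k) {A B : ℝ} (hA : 0 ≤ A) (hB : 0 ≤ B)
    (hfAB : ∀ τ ∈ Ioc (0:ℝ) 1, |f τ| ≤ A + B * τ) {s r : ℝ} (hs : 0 < s) (hsr : s ≤ r)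
    (hr : r ≤ 1) :
    |tailIntegral f k s| ≤ (A + B * r) / (k - 3) * s ^ (2 - k) := by
  have hpow (m : ℤ) : IntervalIntegrable (fun τ : ℝ => τ ^ m) volume s 1 :=
    intervalIntegrable_zpow (Or.inr (zero_notMem_uIcc_one hs))
  have hmajorant : |tailIntegral f k s| ≤ ∫ τ in s..1, (A * τ ^ (1 - k) + B * τ ^ (2 - k)) := by
    refine norm_integral_le_of_norm_le (f := fun τ => τ ^ (1 - k) * f τ) (hsr.trans hr) (ae_of_all _ fun τ hτ => ?_)
      (((hpow _).const_mul A).add ((hpow _).const_mul B))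
    have hτ₀ : 0 < τ := hs.trans hτ.1
    rw [Real.norm_eq_abs, abs_mul, abs_of_pos (zpow_pos hτ₀ _), show 2 - k = 1 - k + 1 by ring,
      zpow_add_one₀ hτ₀.ne']
    nlinarith [hfAB τ ⟨hτ₀, hτ.2⟩, zpow_pos hτ₀ (1 - k)]
  rw [integral_add ((hpow _).const_mul A) ((hpow _).const_mul B), intervalIntegral.integral_const_mul,
    intervalIntegral.integral_const_mul] at hmajorant
  have hk' : (4:ℝ) ≤ k := by exact_mod_cast hk
  have h₁ : ∫ τ in s..1, τ ^ (1 - k) ≤ s ^ (2 - k) / (k - 2) := by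
    convert integral_zpow_le_of_lt_neg_one hs (m := 1 - k) (by omega) using 2
    · ring_nf
    · push_cast; ring
  have h₂ : ∫ τ in s..1, τ ^ (2 - k) ≤ s * s ^ (2 - k) / (k - 3) := by
    convert integral_zpow_le_of_lt_neg_one hs (m := 2 - k) (by omega) using 2
    · rw [← zpow_one_add₀ hs.ne']; ring_nf
    · push_cast; ring
  have hu : 0 < s ^ (2 - k) := zpow_pos hs _
  calc |tailIntegral f k s| ≤ A * (s ^ (2 - k) / (k - 2)) + B * (s * s ^ (2 - k) / (k - 3)) := by
        nlinarith
    _ ≤ A * (s ^ (2 - k) / (k - 3)) + B * (r * s ^ (2 - k) / (k - 3)) := by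
        gcongr <;> linarith
    _ = (A + B * r) / (k - 3) * s ^ (2 - k) := by ring

theorem hasDerivAt_tailIntegral {f : ℝ → ℝ} (k : ℤ) (hf : ContinuousOn f (Ioc 0 1)) {s : ℝ}
    (hs : s ∈ Ioo (0:ℝ) 1) : HasDerivAt (tailIntegral f k) (-(s ^ (1 - k) * f s)) s := by
  have hq : ContinuousOn (fun τ : ℝ => τ ^ (1 - k) * f τ) (Ioc 0 1) :=
    (continuousOn_id.zpow₀ _ fun τ hτ => Or.inl hτ.1.ne').mul hf
  have hq' := hq.mono Ioo_subset_Ioc_self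
  have hsub : uIcc s 1 ⊆ Ioc 0 1 := by
    rw [uIcc_of_le hs.2.le]
    exact fun τ hτ => ⟨hs.1.trans_le hτ.1, hτ.2⟩
  exact integral_hasDerivAt_left (hq.mono hsub).intervalIntegrable
    (hq'.stronglyMeasurableAtFilter isOpen_Ioo s hs) (hq'.continuousAt (isOpen_Ioo.mem_nhds hs))

theorem abs_zpow_mul_tailIntegral_le {f : ℝ → ℝ} {k : ℤ} {C s : ℝ} (hs : 0 < s)
    (hg : |tailIntegral f k s| ≤ C * s ^ (2 - k)) :
    |s ^ (2 * k - 1) * tailIntegral f k s| ≤ C * s ^ (k + 1) := by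
  have hpow : s ^ (2 * k - 1) * s ^ (2 - k) = s ^ (k + 1) := by
    rw [← zpow_add₀ hs.ne']; ring_nf
  rw [abs_mul, abs_of_pos (zpow_pos hs _), ← hpow]
  nlinarith [zpow_pos hs (2 * k - 1)]

theorem hasDerivAt_nestedIntegral {f : ℝ → ℝ} {k : ℤ} (hk : 4 ≤ k)
    (hf : ContinuousOn f (Icc 0 1)) {x : ℝ} (hx : x ∈ Ioo (0:ℝ) 1) :
    HasDerivAt (nestedIntegral f k) (x ^ (2 * k - 1) * tailIntegral f k x) x := by
  obtain ⟨K, hK⟩ := isCompact_Icc.exists_bound_of_continuousOn hf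
  have hK₀ : 0 ≤ K := (norm_nonneg _).trans (hK 0 ⟨le_rfl, zero_le_one⟩)
  have hh : ContinuousOn (fun s => s ^ (2 * k - 1) * tailIntegral f k s) (Ioo 0 1) :=
    (continuousOn_id.zpow₀ _ fun s hs => Or.inl hs.1.ne').mul fun s hs =>
      (hasDerivAt_tailIntegral k (hf.mono Ioc_subset_Icc_self) hs).continuousAt.continuousWithinAt
  have hbound : ∀ s ∈ Ioc (0:ℝ) x, ‖s ^ (2 * k - 1) * tailIntegral f k s‖ ≤ K / (k - 3) := by
    intro s hs
    have hg := abs_tailIntegral_le hk hK₀ le_rfl (B := 0)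
      (fun τ hτ => by simpa using hK τ (Ioc_subset_Icc_self hτ)) hs.1 le_rfl (hs.2.trans hx.2.le)
    have hk' : (4:ℝ) ≤ k := by exact_mod_cast hk
    have hpow : s ^ (k + 1) ≤ 1 :=
      zpow_le_one₀ hs.1 (hs.2.trans hx.2.le) (by omega)
    calc ‖s ^ (2 * k - 1) * tailIntegral f k s‖ ≤ K / (k - 3) * s ^ (k + 1) :=
          abs_zpow_mul_tailIntegral_le hs.1 (by simpa using hg)
      _ ≤ K / (k - 3) := mul_le_of_le_one_right (div_nonneg hK₀ (by linarith)) hpow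
  have hint : IntervalIntegrable (fun s => s ^ (2 * k - 1) * tailIntegral f k s) volume 0 x := by
    rw [intervalIntegrable_iff_integrableOn_Ioc_of_le hx.1.le]
    refine (integrable_const (K / (k - 3))).mono'
      ((hh.mono fun s hs => ⟨hs.1, hs.2.trans_lt hx.2⟩).aestronglyMeasurable measurableSet_Ioc) ?_
    exact (ae_restrict_iff' measurableSet_Ioc).2 (ae_of_all _ hbound)
  exact integral_hasDerivAt_right hint (hh.stronglyMeasurableAtFilter isOpen_Ioo x hx)
    (hh.continuousAt (isOpen_Ioo.mem_nhds hx))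

theorem abs_nestedIntegral_le {f : ℝ → ℝ} {k : ℤ} (hk : 0 ≤ k + 1) {C r : ℝ} (hr : 0 ≤ r)
    (hg : ∀ s ∈ Ioc 0 r, |tailIntegral f k s| ≤ C * s ^ (2 - k)) :
    |nestedIntegral f k r| ≤ C * r ^ (k + 2) / (k + 2) := by
  have hint : IntervalIntegrable (fun s : ℝ => C * s ^ (k + 1)) volume 0 r :=
    (intervalIntegrable_zpow (Or.inl hk)).const_mul C
  calc |nestedIntegral f k r| ≤ ∫ s in (0:ℝ)..r, C * s ^ (k + 1) :=
        norm_integral_le_of_norm_le (f := fun s => s ^ (2 * k - 1) * tailIntegral f k s) hr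
          (ae_of_all _ fun s hs => abs_zpow_mul_tailIntegral_le hs.1 (hg s hs)) hint
    _ = C * r ^ (k + 2) / (k + 2) := by
        rw [intervalIntegral.integral_const_mul, integral_zpow (Or.inl hk), zero_zpow _ (by omega),
          show k + 1 + 1 = k + 2 by ring]
        push_cast
        ring

section BuildingBlock

variable {f : ℝ → ℝ} {k : ℤ} {x : ℝ}

theorem hasDerivAt_buildingBlock (hk : 4 ≤ k) (hf : ContinuousOn f (Icc 0 1))
    (hx : x ∈ Ioo (0:ℝ) 1) :
    HasDerivAt (fun y => -(y ^ (-k)) * nestedIntegral f k y)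
      (k * x ^ (-k - 1) * nestedIntegral f k x - x ^ (k - 1) * tailIntegral f k x) x := by
  have hpow : x ^ (-k) * x ^ (2 * k - 1) = x ^ (k - 1) := by
    rw [← zpow_add₀ hx.1.ne']; ring_nf
  refine (((hasDerivAt_zpow (-k) x (Or.inl hx.1.ne')).neg).mul
    (hasDerivAt_nestedIntegral hk hf hx)).congr_deriv ?_
  push_cast [Pi.neg_apply]
  linear_combination (-tailIntegral f k x) * hpow

theorem hasDerivAt_deriv_buildingBlock (hk : 4 ≤ k) (hf : ContinuousOn f (Icc 0 1))
    (hx : x ∈ Ioo (0:ℝ) 1) :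
    HasDerivAt (fun y => k * y ^ (-k - 1) * nestedIntegral f k y - y ^ (k - 1) * tailIntegral f k y)
      (-(k * (k + 1)) * x ^ (-k - 2) * nestedIntegral f k x + x ^ (k - 2) * tailIntegral f k x
        + f x) x := by
  have hx₀ := hx.1.ne'
  have hpow₁ : x ^ (-k - 1) * x ^ (2 * k - 1) = x ^ (k - 2) := by
    rw [← zpow_add₀ hx₀]; ring_nf
  have hpow₂ : x ^ (k - 1) * x ^ (1 - k) = 1 := by
    rw [← zpow_add₀ hx₀]; ring_nf; exact zpow_zero x
  refine ((((hasDerivAt_zpow (-k - 1) x (Or.inl hx₀)).const_mul (k : ℝ)).mul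
    (hasDerivAt_nestedIntegral hk hf hx)).sub ((hasDerivAt_zpow (k - 1) x (Or.inl hx₀)).mul
    (hasDerivAt_tailIntegral k (hf.mono Ioc_subset_Icc_self) hx))).congr_deriv ?_
  rw [show -k - 1 - 1 = -k - 2 by ring, show k - 1 - 1 = k - 2 by ring]
  push_cast
  linear_combination (k * tailIntegral f k x) * hpow₁ + f x * hpow₂

theorem deriv_deriv_eq_of_eqOn {fn : ℝ → ℝ} (hk : 4 ≤ k) (hf : ContinuousOn f (Icc 0 1))
    (hfn : EqOn fn (fun y => -(y ^ (-k)) * nestedIntegral f k y) (Ioo 0 1))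
    (hx : x ∈ Ioo (0:ℝ) 1) :
    deriv (deriv fn) x = -(k * (k + 1)) * x ^ (-k - 2) * nestedIntegral f k x
      + x ^ (k - 2) * tailIntegral f k x + f x := by
  have hderiv : deriv fn =ᶠ[nhds x]
      fun y => k * y ^ (-k - 1) * nestedIntegral f k y - y ^ (k - 1) * tailIntegral f k y :=
    Filter.eventually_of_mem (isOpen_Ioo.mem_nhds hx) fun y hy =>
      ((hasDerivAt_buildingBlock hk hf hy).congr_of_eventuallyEq
        (Filter.eventually_of_mem (isOpen_Ioo.mem_nhds hy) hfn)).deriv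
  rw [hderiv.deriv_eq, (hasDerivAt_deriv_buildingBlock hk hf hx).deriv]

end BuildingBlock

theorem abs_deriv_deriv_le {f fn : ℝ → ℝ} {k : ℤ} (hk : 4 ≤ k) (hf : ContinuousOn f (Icc 0 1))
    {A B : ℝ} (hA : 0 ≤ A) (hB : 0 ≤ B) (hfAB : ∀ τ ∈ Ioc (0:ℝ) 1, |f τ| ≤ A + B * τ)
    (hfn : EqOn fn (fun y => -(y ^ (-k)) * nestedIntegral f k y) (Ioo 0 1))
    {r : ℝ} (hr : r ∈ Ioo (0:ℝ) 1) :
    |deriv (deriv fn) r| ≤ 6 * (A + B * r) := by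
  have hk' : (4:ℝ) ≤ k := by exact_mod_cast hk
  have hr₀ := hr.1
  set C := (A + B * r) / (k - 3) with hC
  have hC₀ : 0 ≤ C := div_nonneg (by positivity) (by linarith)
  have hg : ∀ s ∈ Ioc 0 r, |tailIntegral f k s| ≤ C * s ^ (2 - k) := fun s hs =>
    abs_tailIntegral_le hk hA hB hfAB hs.1 hs.2 hr.2.le
  have hF : |nestedIntegral f k r| ≤ C * r ^ (k + 2) / (k + 2) :=
    abs_nestedIntegral_le (by omega) hr₀.le hg
  have hpow₁ : r ^ (-k - 2) * r ^ (k + 2) = 1 := by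
    rw [← zpow_add₀ hr₀.ne']; ring_nf; exact zpow_zero r
  have hpow₂ : r ^ (k - 2) * r ^ (2 - k) = 1 := by
    rw [← zpow_add₀ hr₀.ne']; ring_nf; exact zpow_zero r
  have hterm₁ : |-(k * (k + 1)) * r ^ (-k - 2) * nestedIntegral f k r| ≤ k * C := by
    rw [abs_mul, abs_mul, abs_of_pos (zpow_pos hr₀ _), abs_neg,
      abs_of_nonneg (by positivity : (0:ℝ) ≤ k * (k + 1))]
    calc k * (k + 1) * r ^ (-k - 2) * |nestedIntegral f k r|
        ≤ k * (k + 1) * r ^ (-k - 2) * (C * r ^ (k + 2) / (k + 2)) := by gcongr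
      _ = k * (k + 1) / (k + 2) * C * (r ^ (-k - 2) * r ^ (k + 2)) := by ring
      _ ≤ k * C := by
          rw [hpow₁, mul_one]
          gcongr
          rw [div_le_iff₀ (by linarith)]
          nlinarith
  have hterm₂ : |r ^ (k - 2) * tailIntegral f k r| ≤ C := by
    rw [abs_mul, abs_of_pos (zpow_pos hr₀ _)]
    calc r ^ (k - 2) * |tailIntegral f k r| ≤ r ^ (k - 2) * (C * r ^ (2 - k)) := by
          gcongr
          exact hg r ⟨hr₀, le_rfl⟩
      _ = C := by linear_combination C * hpow₂
  have hterm₃ : |f r| ≤ A + B * r := hfAB r ⟨hr₀, hr.2.le⟩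
  have hkC : (k + 1) * C ≤ 5 * (A + B * r) := by
    rw [hC, mul_div_assoc', div_le_iff₀ (by linarith)]
    nlinarith [show 0 ≤ A + B * r by positivity]
  rw [deriv_deriv_eq_of_eqOn hk hf hfn hr]
  calc _ ≤ k * C + C + (A + B * r) :=
        (abs_add_three _ _ _).trans (add_le_add_three hterm₁ hterm₂ hterm₃)
    _ ≤ 6 * (A + B * r) := by linarith

theorem stmt9 :
    ∃ C > (0:ℝ), ∀ (fbar : ℝ → ℝ),
      (∀ r ∈ Set.Icc (0:ℝ) 1, 0 ≤ fbar r) →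
      (∀ x ∈ Set.Icc (0:ℝ) 1, DifferentiableAt ℝ fbar x) →
      ContinuousOn (deriv fbar) (Set.Icc 0 1) →
      ConcaveOn ℝ (Set.Icc 0 1) fbar →
      fbar 1 = 0 →
      ∀ (f : ℝ → ℝ), ContinuousOn f (Set.Icc 0 1) →
      (∀ r ∈ Set.Icc (0:ℝ) 1, |f r| ≤ fbar r) →
      ∀ (n : ℕ), 1 ≤ n →
      ∀ (fn : ℝ → ℝ),
      (∀ r ∈ Set.Ioo (0:ℝ) 1,
        fn r = -(r ^ (-(4 * (n:ℤ)))) *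
          ∫ s in (0:ℝ)..r, s ^ (8 * (n:ℤ) - 1) * ∫ τ in s..(1:ℝ), τ ^ (1 - 4 * (n:ℤ)) * f τ) →
      ∀ r ∈ Set.Ioo (0:ℝ) 1,
        |deriv (deriv fn) r| ≤ C *
            (sSup (fbar '' Set.Icc 0 r) +
              sSup ((fun τ => τ * deriv fbar τ) '' Set.Icc 0 r)) := by
  refine ⟨6, by norm_num, ?_⟩
  intro fbar hfbar₀ hfbar_diff hfbar'_cont hconc _ f hf hf_le n hn fn hfn r hr
  set M₁ := sSup (fbar '' Icc 0 r)
  set M₂ := sSup ((fun τ => τ * deriv fbar τ) '' Icc 0 r)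
  have hIcc : Icc 0 r ⊆ Icc (0:ℝ) 1 := Icc_subset_Icc_right hr.2.le
  have hM₁ : ∀ τ ∈ Icc 0 r, fbar τ ≤ M₁ := fun τ hτ =>
    ContinuousOn.le_sSup_image_Icc
      (fun x hx => (hfbar_diff x (hIcc hx)).continuousAt.continuousWithinAt) hτ
  have hM₂ : ∀ τ ∈ Icc 0 r, τ * deriv fbar τ ≤ M₂ := fun τ hτ =>
    (continuousOn_id.mul (hfbar'_cont.mono hIcc)).le_sSup_image_Icc hτ
  have hM₁₀ : 0 ≤ M₁ := (hfbar₀ 0 ⟨le_rfl, zero_le_one⟩).trans (hM₁ 0 ⟨le_rfl, hr.1.le⟩)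
  have hM₂₀ : 0 ≤ M₂ := by simpa using hM₂ 0 ⟨le_rfl, hr.1.le⟩
  have hr' : r ∈ Icc (0:ℝ) 1 := Ioo_subset_Icc_self hr
  have hf_linear : ∀ τ ∈ Ioc (0:ℝ) 1, |f τ| ≤ M₁ + M₂ / r * τ := fun τ hτ =>
    (hf_le τ (Ioc_subset_Icc_self hτ)).trans <| hconc.le_add_div_mul hr.1 hr' (hfbar_diff r hr')
      (fun σ hσ hσr => hM₁ σ ⟨hσ.1, hσr⟩) (hM₂ r ⟨hr.1.le, le_rfl⟩) hM₂₀
      (Ioc_subset_Icc_self hτ) hτ.1.le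
  have hfn' : EqOn fn (fun y => -(y ^ (-(4 * n : ℤ))) * nestedIntegral f (4 * n) y) (Ioo 0 1) :=
    fun y hy => by rw [hfn y hy, show 8 * (n:ℤ) - 1 = 2 * (4 * n) - 1 by ring]; rfl
  have key := abs_deriv_deriv_le (by omega) hf hM₁₀ (div_nonneg hM₂₀ hr.1.le) hf_linear hfn' hr
  rwa [div_mul_cancel₀ _ hr.1.ne'] at key
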